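/- Let G₀ be an H-free graph, where H is a connected bipartite graph on h ≥ 3 vertices, and let G be obtained from G₀ by replacing each vertex with a clique of size t (a 'blob'), putting all t² edges between two blobs if the corresponding vertices of G₀ are adjacent and no edges otherwise. Then G contains no induced copy of H. -/

import Mathlib

/-
If `φ` is an induced copy of `H` in the blowup, then `u ↦ blob of φ u` is a homomorphism
`H → G₀` as soon as no edge of `H` lies inside a blob, and it is injective because two
distinct vertices sharing a blob are adjacent and have the same neighbours outside the pair.
Such adjacent twins cannot exist in a connected triangle-free graph with a third vertex:
some vertex outside the pair is adjacent to one of them, hence to both, giving a triangle.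
-/

open SimpleGraph

/-- The blowup of `G₀` where every vertex is replaced by a clique ("blob") of size `t`,
with complete joins between blobs corresponding to edges of `G₀`. -/
def blowup {W : Type*} (G₀ : SimpleGraph W) (t : ℕ) : SimpleGraph (W × Fin t) where
  Adj x y := (x.1 = y.1 ∧ x.2 ≠ y.2) ∨ G₀.Adj x.1 y.1
  symm := by
    constructor
    rintro x y (⟨h1, h2⟩ | h)
    · exact Or.inl ⟨h1.symm, h2.symm⟩
    · exact Or.inr h.symm
  loopless := by
    constructor
    rintro x (⟨h1, h2⟩ | h)
    · exact h2 rfl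
    · exact G₀.irrefl h

namespace SimpleGraph

variable {V : Type*} {G : SimpleGraph V}

theorem Connected.exists_ne_ne_not_adj_iff_of_adj (hG : G.Connected) (hG₃ : G.CliqueFree 3)
    {u v w : V} (huv : G.Adj u v) (hwu : w ≠ u) (hwv : w ≠ v) :
    ∃ x, x ≠ u ∧ x ≠ v ∧ ¬ (G.Adj x u ↔ G.Adj x v) := by
  classical
  by_contra! htwin
  obtain ⟨d, -, hx, hy⟩ :=
    (hG w u).some.exists_boundary_dart ({u, v}ᶜ : Set V) (by simp [hwu, hwv]) (by simp)
  simp only [Set.mem_compl_iff, Set.mem_insert_iff, Set.mem_singleton_iff, not_or] at hx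
  simp only [Set.mem_compl_iff, not_not, Set.mem_insert_iff, Set.mem_singleton_iff] at hy
  have hxu : G.Adj d.fst u ∧ G.Adj d.fst v := by
    rcases hy with hy | hy
    · exact ⟨hy ▸ d.adj, (htwin _ hx.1 hx.2).1 (hy ▸ d.adj)⟩
    · exact ⟨(htwin _ hx.1 hx.2).2 (hy ▸ d.adj), hy ▸ d.adj⟩
  exact hG₃ {d.fst, u, v} (is3Clique_triple_iff.2 ⟨hxu.1, hxu.2, huv⟩)

end SimpleGraph

namespace blowup

variable {W : Type*} {G₀ : SimpleGraph W} {t : ℕ}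

theorem adj_iff_adj_of_fst_eq {x y z : W × Fin t} (hxy : x.1 = y.1) (hzx : z ≠ x)
    (hzy : z ≠ y) : (blowup G₀ t).Adj z x ↔ (blowup G₀ t).Adj z y := by
  simp only [blowup, hxy]
  constructor <;> rintro (⟨h, -⟩ | h)
  · exact .inl ⟨h, fun h' => hzy (Prod.ext h h')⟩
  · exact .inr h
  · exact .inl ⟨h, fun h' => hzx (Prod.ext (h.trans hxy.symm) h')⟩
  · exact .inr h

variable {V : Type*} {H : SimpleGraph V} (φ : H ↪g blowup G₀ t)

theorem adj_of_fst_eq {u v : V} (huv : u ≠ v) (h : (φ u).1 = (φ v).1) : H.Adj u v :=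
  φ.map_adj_iff.1 (.inl ⟨h, fun h' => huv (φ.injective (Prod.ext h h'))⟩)

theorem comap_adj_iff_adj_of_fst_eq {u v x : V} (h : (φ u).1 = (φ v).1) (hxu : x ≠ u)
    (hxv : x ≠ v) : H.Adj x u ↔ H.Adj x v := by
  rw [← φ.map_adj_iff, ← φ.map_adj_iff]
  exact adj_iff_adj_of_fst_eq h (φ.injective.ne hxu) (φ.injective.ne hxv)

theorem fst_injective (hconn : H.Connected) (hH₃ : H.CliqueFree 3) (hV : 3 ≤ ENat.card V) :
    Function.Injective fun u => (φ u).1 := by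
  intro u v h
  by_contra huv
  obtain ⟨w, hwu, hwv⟩ := ENat.exists_ne_ne_of_three_le hV u v
  obtain ⟨x, hxu, hxv, hx⟩ :=
    hconn.exists_ne_ne_not_adj_iff_of_adj hH₃ (adj_of_fst_eq φ huv h) hwu hwv
  exact hx (comap_adj_iff_adj_of_fst_eq φ h hxu hxv)

def fstHom (hconn : H.Connected) (hH₃ : H.CliqueFree 3) (hV : 3 ≤ ENat.card V) : H →g G₀ where
  toFun u := (φ u).1
  map_rel' huv := (φ.map_adj_iff.2 huv).resolve_left fun h =>
    H.ne_of_adj huv (fst_injective φ hconn hH₃ hV h.1)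

end blowup

theorem stmt_6 {W : Type*} (G₀ : SimpleGraph W) (t h : ℕ) (hh : 3 ≤ h)
    (H : SimpleGraph (Fin h)) (hconn : H.Connected) (hbip : H.Colorable 2)
    (hfree : ∀ f : H →g G₀, ¬ Function.Injective f) :
    IsEmpty (H ↪g blowup G₀ t) := by
  refine ⟨fun φ => ?_⟩
  have hH₃ : H.CliqueFree 3 := hbip.cliqueFree (by norm_num)
  have hV : 3 ≤ ENat.card (Fin h) := by simpa using hh
  exact hfree (blowup.fstHom φ hconn hH₃ hV) (blowup.fst_injective φ hconn hH₃ hV)
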